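/- arXiv:2311.02757 — 2 statements merged into one kernel-verified Lean document; each statement's English description precedes it below -/
import Mathlib

section
/- Let n ∈ ℕ with n ≥ 1, let μ be the product measure on ℝ^n whose coordinates are i.i.d. standard Gaussian N(0,1), let v ∈ ℝ^n be nonzero, and let p ∈ (0,1). Define w*(ω) = 1 if ⟨v, ω⟩ ≥ −‖v‖₂ · Φ⁻¹(p) and w*(ω) = 0 otherwise. Then ∫ w* dμ = p and ∫ ⟨v, ω⟩ · w*(ω) dμ(ω) = (‖v‖₂ / √(2π)) · exp(−Φ⁻¹(p)² / 2). -/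
/-!
Under the standard Gaussian measure the functional `ω ↦ ⟪v, ω⟫` has law `N(0, ‖v‖²)`, i.e. the law
of `‖v‖ t` with `t ~ N(0, 1)`. Writing `q = Φ⁻¹(p)`, the indicator `w*` becomes `1_{t ≥ -q}`; its
mass is `Φ(q) = p` by symmetry of `N(0, 1)`, and the correlation is `‖v‖ ∫_{-q}^∞ t φ(t) dt`, which
equals `‖v‖ φ(q)` because `-φ` is a primitive of `t φ(t)`. Since `Φ⁻¹` is `Function.invFun Φ`,
`Φ(Φ⁻¹ p) = p` needs `p` in the range of `Φ`, which follows from continuity of `Φ` and its limits.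
-/

open MeasureTheory ProbabilityTheory
open scoped RealInnerProductSpace

/-- The cumulative distribution function `Φ` of the standard Gaussian measure `N(0,1)` on `ℝ`. -/
noncomputable def Phi (x : ℝ) : ℝ := ((gaussianReal 0 1) (Set.Iic x)).toReal

/-- The inverse `Φ⁻¹` of the standard Gaussian CDF on `(0,1)`. -/
noncomputable def PhiInv (p : ℝ) : ℝ := Function.invFun Phi p

open Set Filter Real
open scoped NNReal

lemma Phi_eq_cdf : Phi = cdf (gaussianReal 0 1) := by
  ext x
  rw [cdf_eq_real, Phi, measureReal_def]

lemma Phi_eq_setIntegral (x : ℝ) : Phi x = ∫ t in Iic x, gaussianPDFReal 0 1 t := by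
  rw [Phi, gaussianReal_apply_eq_integral 0 one_ne_zero,
    ENNReal.toReal_ofReal (setIntegral_nonneg measurableSet_Iic
      fun t _ => gaussianPDFReal_nonneg 0 1 t)]

lemma continuous_Phi : Continuous Phi := by
  have hint := integrable_gaussianPDFReal 0 1
  have h : Phi = fun x => Phi 0 + ∫ t in (0 : ℝ)..x, gaussianPDFReal 0 1 t := by
    ext x
    rw [← intervalIntegral.integral_Iic_sub_Iic hint.integrableOn hint.integrableOn,
      Phi_eq_setIntegral, Phi_eq_setIntegral]
    ring
  rw [h]
  exact continuous_const.add (hint.continuous_primitive 0)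

lemma Phi_PhiInv {p : ℝ} (hp : p ∈ Ioo 0 1) : Phi (PhiInv p) = p := by
  refine Function.invFun_eq (mem_range_of_exists_le_of_exists_ge continuous_Phi ?_ ?_)
  · rw [Phi_eq_cdf]
    exact ((tendsto_cdf_atBot _).eventually (eventually_le_nhds hp.1)).exists
  · rw [Phi_eq_cdf]
    exact ((tendsto_cdf_atTop _).eventually (eventually_ge_nhds hp.2)).exists

lemma gaussianReal_real_Ici_neg {v : ℝ≥0} (x : ℝ) :
    (gaussianReal 0 v).real (Ici (-x)) = (gaussianReal 0 v).real (Iic x) := by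
  conv_lhs => rw [← neg_zero, ← gaussianReal_map_neg,
    map_measureReal_apply measurable_neg measurableSet_Ici]
  simp

lemma integral_Ioi_mul_exp_neg_sq_div_two (a : ℝ) :
    ∫ x in Ioi a, x * exp (-x ^ 2 / 2) = exp (-a ^ 2 / 2) := by
  have hderiv (x : ℝ) : HasDerivAt (fun y => -exp (-y ^ 2 / 2)) (x * exp (-x ^ 2 / 2)) x := by
    have h : HasDerivAt (fun y : ℝ => -y ^ 2 / 2) (-x) x :=
      ((hasDerivAt_pow 2 x).fun_neg.div_const 2).congr_deriv (by norm_num; ring)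
    exact h.exp.fun_neg.congr_deriv (by ring)
  have hint : IntegrableOn (fun x => x * exp (-x ^ 2 / 2)) (Ioi a) := by
    convert (integrable_mul_exp_neg_mul_sq (b := 1 / 2) (by norm_num)).integrableOn using 4
    ring
  have hlim : Tendsto (fun y => -exp (-y ^ 2 / 2)) atTop (nhds 0) := by
    simpa [neg_div] using (tendsto_exp_atBot.comp (tendsto_neg_atTop_atBot.comp
      ((tendsto_pow_atTop two_ne_zero).atTop_div_const two_pos))).neg
  rw [integral_Ioi_of_hasDerivAt_of_tendsto (hderiv a).continuousAt.continuousWithinAt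
    (fun x _ => hderiv x) hint hlim]
  ring

lemma setIntegral_Ici_id_gaussianReal (a : ℝ) :
    ∫ x in Ici a, x ∂gaussianReal 0 1 = exp (-a ^ 2 / 2) / √(2 * π) := by
  have hpdf (x : ℝ) : gaussianPDFReal 0 1 x * x = (√(2 * π))⁻¹ * (x * exp (-x ^ 2 / 2)) := by
    simp only [gaussianPDFReal, NNReal.coe_one, mul_one, sub_zero]
    ring
  rw [← integral_indicator measurableSet_Ici, integral_gaussianReal_eq_integral_smul one_ne_zero]
  simp_rw [smul_eq_mul, ← indicator_mul_right, integral_indicator measurableSet_Ici, hpdf]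
  rw [integral_const_mul, integral_Ici_eq_integral_Ioi, integral_Ioi_mul_exp_neg_sq_div_two]
  ring

section stdGaussian

variable {E : Type*} [NormedAddCommGroup E] [InnerProductSpace ℝ E] [FiniteDimensional ℝ E]
  [MeasurableSpace E] [BorelSpace E]

lemma map_inner_stdGaussian (v : E) :
    (stdGaussian E).map (⟪v, ·⟫) = gaussianReal 0 (‖v‖₊ ^ 2) := by
  have h := IsGaussian.map_eq_gaussianReal (μ := stdGaussian E) (innerSL ℝ v)
  rwa [integral_strongDual_stdGaussian, variance_dual_stdGaussian, innerSL_apply_norm,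
    ← coe_nnnorm, ← NNReal.coe_pow, Real.toNNReal_coe] at h

lemma integral_comp_inner_stdGaussian {F : Type*} [NormedAddCommGroup F] [NormedSpace ℝ F]
    (v : E) {g : ℝ → F} (hg : StronglyMeasurable g) :
    ∫ x, g ⟪v, x⟫ ∂stdGaussian E = ∫ t, g (‖v‖ * t) ∂gaussianReal 0 1 := by
  have hmap : (stdGaussian E).map (⟪v, ·⟫) = (gaussianReal 0 1).map (‖v‖ * ·) := by
    rw [map_inner_stdGaussian, gaussianReal_map_const_mul]
    congr 1
    · simp
    · ext; simp
  rw [← integral_map (by fun_prop) hg.aestronglyMeasurable, hmap,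
    integral_map (by fun_prop) hg.aestronglyMeasurable]

end stdGaussian

theorem stmt_5_general
    (n : ℕ)
    (μ : Measure (EuclideanSpace ℝ (Fin n)))
    (hμ : μ = Measure.map (WithLp.toLp 2) (Measure.pi (fun _ => gaussianReal 0 1)))
    (v : EuclideanSpace ℝ (Fin n)) (hv : v ≠ 0)
    (p : ℝ) (hp : p ∈ Set.Ioo (0 : ℝ) 1)
    (wStar : EuclideanSpace ℝ (Fin n) → ℝ)
    (hwStar : ∀ ω, wStar ω = if -‖v‖ * PhiInv p ≤ ⟪v, ω⟫ then (1 : ℝ) else 0) :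
    ∫ ω, wStar ω ∂μ = p ∧
      ∫ ω, ⟪v, ω⟫ * wStar ω ∂μ =
        ‖v‖ / Real.sqrt (2 * Real.pi) * Real.exp (-(PhiInv p) ^ 2 / 2) := by
  set q := PhiInv p
  let w : ℝ → ℝ := fun t => if -‖v‖ * q ≤ t then 1 else 0
  have hw_meas : Measurable w := measurable_const.ite measurableSet_Ici measurable_const
  have hw (t : ℝ) : w (‖v‖ * t) = (Ici (-q)).indicator 1 t := by
    simp only [w, neg_mul, ← mul_neg, mul_le_mul_iff_right₀ (norm_pos_iff.mpr hv),
      indicator_apply, mem_Ici, Pi.one_apply]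
  have hind (t : ℝ) : t * (Ici (-q)).indicator 1 t = (Ici (-q)).indicator (fun x => x) t := by
    simp [indicator_apply]
  rw [hμ, map_pi_eq_stdGaussian, show wStar = fun ω => w ⟪v, ω⟫ from funext hwStar]
  constructor
  · rw [integral_comp_inner_stdGaussian v hw_meas.stronglyMeasurable]
    simp_rw [hw]
    rw [integral_indicator_one measurableSet_Ici, gaussianReal_real_Ici_neg, measureReal_def]
    exact Phi_PhiInv hp
  · rw [integral_comp_inner_stdGaussian v (g := fun t => t * w t)
      (measurable_id.mul hw_meas).stronglyMeasurable]
    simp_rw [hw, mul_assoc, hind]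
    rw [integral_const_mul, integral_indicator measurableSet_Ici, setIntegral_Ici_id_gaussianReal,
      neg_sq]
    ring

/-- **Lemma A.3 (attainment)**: the half-space indicator
`w*(ω) = 1_{⟨v,ω⟩ ≥ −‖v‖·Φ⁻¹(p)}` has Gaussian mean `p` and achieves correlation
`(‖v‖₂/√(2π)) · exp(−Φ⁻¹(p)²/2)` with the linear functional `ω ↦ ⟨v, ω⟩`. -/
theorem stmt_5
    (n : ℕ) (hn : 1 ≤ n)
    (μ : Measure (EuclideanSpace ℝ (Fin n)))
    (hμ : μ = Measure.map (WithLp.toLp 2) (Measure.pi (fun _ => gaussianReal 0 1)))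
    (v : EuclideanSpace ℝ (Fin n)) (hv : v ≠ 0)
    (p : ℝ) (hp : p ∈ Set.Ioo (0 : ℝ) 1)
    (wStar : EuclideanSpace ℝ (Fin n) → ℝ)
    (hwStar : ∀ ω, wStar ω = if -‖v‖ * PhiInv p ≤ ⟪v, ω⟫ then (1 : ℝ) else 0) :
    ∫ ω, wStar ω ∂μ = p ∧
      ∫ ω, ⟪v, ω⟫ * wStar ω ∂μ =
        ‖v‖ / Real.sqrt (2 * Real.pi) * Real.exp (-(PhiInv p) ^ 2 / 2) :=
  stmt_5_general n μ hμ v hv p hp wStar hwStar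
end

section
/- Fix n ∈ ℕ and β ∈ (1/2, 1), and let Γ be a random vector in {0,1}^n whose coordinates are independent, each equal to 0 with probability β and to 1 with probability 1−β. Let h : {0,1}^n → {0,1}, let a ∈ {0,1}^n, and define the smoothed classifier g̃(b) = 1 if P(h(b ⊕ Γ) = 1) > 1/2 and g̃(b) = 0 otherwise. For i ∈ ℤ and Δ ∈ {0,1}^n, write H_i(Δ) = {z ∈ {0,1}^n : ‖z ⊕ a ⊕ Δ‖₀ − ‖z ⊕ a‖₀ = i}. Suppose P(h(a ⊕ Γ) = 1) > 1/2, and suppose ε ∈ ℕ is such that for every Δ ∈ {0,1}^n with ‖Δ‖₀ ≤ ε there exist μ_Δ ∈ ℤ and H'_Δ ⊆ H_{μ_Δ}(Δ) such that, setting H_Δ = (⋃_{i > μ_Δ} H_i(Δ)) ∪ H'_Δ, one has P(a ⊕ Γ ∈ H_Δ) ≤ P(h(a ⊕ Γ) = 1) and P(a ⊕ Δ ⊕ Γ ∈ H_Δ) > 1/2. Then for every Δ ∈ {0,1}^n with ‖Δ‖₀ ≤ ε, P(h(a ⊕ Δ ⊕ Γ) = 1) > 1/2 and hence g̃(a ⊕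 Δ) = g̃(a) = 1. -/
/-!
Write `q = (1 - β) / β ≤ 1`. Under the noise, `c ⊕ Γ` puts mass `β ^ n * q ^ ‖z ⊕ c‖₀` on `z`,
so the likelihood ratio of `a ⊕ Δ ⊕ Γ` to `a ⊕ Γ` at `z` is `q ^ (‖z ⊕ a ⊕ Δ‖₀ - ‖z ⊕ a‖₀)`:
at most `q ^ μ_Δ` on the region `H_Δ` and at least `q ^ μ_Δ` off it. By the Neyman–Pearson
lemma, `H_Δ` therefore has the least `(a ⊕ Δ ⊕ Γ)`-mass among all regions of at least its
`(a ⊕ Γ)`-mass, and `{h = 1}` is such a region.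
-/

open MeasureTheory ProbabilityTheory
open scoped ENNReal

/-- The Bernoulli flip-noise distribution on `{0,1} = ZMod 2`: it takes the value `0` with
probability `β` and the value `1` with probability `1 − β`. -/
noncomputable def flipNoise (β : ℝ) : Measure (ZMod 2) :=
  ENNReal.ofReal β • Measure.dirac 0 + ENNReal.ofReal (1 - β) • Measure.dirac 1

section NeymanPearson

variable {α : Type*} [MeasurableSpace α] [Countable α] [MeasurableSingletonClass α]

theorem measure_mono_of_forall_singleton_le {ν₁ ν₂ : Measure α} {s : Set α}
    (h : ∀ z ∈ s, ν₁ {z} ≤ ν₂ {z}) : ν₁ s ≤ ν₂ s := by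
  have hsum (ν : Measure α) : ∑' z : s, ν {(z : α)} = ν s := by
    simpa using tsum_measure_preimage_singleton (μ := ν) s.to_countable (f := id)
      fun z _ => measurableSet_singleton z
  rw [← hsum ν₁, ← hsum ν₂]
  exact ENNReal.tsum_le_tsum fun z => h z z.2

/-- The Neyman–Pearson lemma for discrete measures. -/
theorem measure_le_of_likelihoodRatio {μ ν : Measure α} [IsFiniteMeasure μ] {t : ℝ≥0∞}
    {H A : Set α} (hH : ∀ z ∈ H, ν {z} ≤ t * μ {z}) (hHc : ∀ z ∉ H, t * μ {z} ≤ ν {z})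
    (hμ : μ H ≤ μ A) : ν H ≤ ν A := by
  have hmeas (s : Set α) : MeasurableSet s := s.to_countable.measurableSet
  have hdiff : μ (H \ A) ≤ μ (A \ H) := by
    rw [← measure_inter_add_sdiff H (hmeas A), ← measure_inter_add_sdiff A (hmeas H),
      Set.inter_comm] at hμ
    exact ENNReal.le_of_add_le_add_left (measure_ne_top μ _) hμ
  have hle {s : Set α} (hs : s ⊆ H) : ν s ≤ t * μ s :=
    measure_mono_of_forall_singleton_le (ν₂ := t • μ) fun z hz => hH z (hs hz)
  have hge {s : Set α} (hs : s ⊆ Hᶜ) : t * μ s ≤ ν s :=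
    measure_mono_of_forall_singleton_le (ν₁ := t • μ) fun z hz => hHc z (hs hz)
  calc ν H = ν (H ∩ A) + ν (H \ A) := (measure_inter_add_sdiff H (hmeas A)).symm
    _ ≤ ν (H ∩ A) + t * μ (H \ A) := by gcongr; exact hle Set.sdiff_subset
    _ ≤ ν (H ∩ A) + t * μ (A \ H) := by gcongr
    _ ≤ ν (A ∩ H) + ν (A \ H) := by
      rw [Set.inter_comm]
      gcongr
      exact hge fun z hz => hz.2
    _ = ν A := measure_inter_add_sdiff A (hmeas H)

end NeymanPearson

theorem prod_ite_eq_zero_eq_pow_mul_pow {ι M R : Type*} [Fintype ι] [Zero M] [DecidableEq M]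
    [CommMonoid R] (x : ι → M) (p r : R) :
    ∏ i, (if x i = 0 then p else r) =
      p ^ (Fintype.card ι - hammingNorm x) * r ^ hammingNorm x := by
  classical
  have hzero : (Finset.univ.filter fun i => x i = 0).card = Fintype.card ι - hammingNorm x := by
    rw [hammingNorm, ← Finset.card_compl, Finset.compl_filter]
    simp only [ne_eq, not_not]
  rw [Finset.prod_ite, Finset.prod_const, Finset.prod_const, hzero, hammingNorm]

instance (β : ℝ) : IsFiniteMeasure (flipNoise β) := by
  unfold flipNoise
  constructor
  simp [ENNReal.add_lt_top]

theorem flipNoise_singleton (β : ℝ) (c : ZMod 2) :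
    flipNoise β {c} = ENNReal.ofReal (if c = 0 then β else 1 - β) := by
  rcases (by decide : ∀ c : ZMod 2, c = 0 ∨ c = 1) c with rfl | rfl <;> simp [flipNoise]

section ProductNoise

variable {ι : Type*} [Fintype ι] {β : ℝ}

theorem pi_flipNoise_singleton (hβ₀ : 0 < β) (hβ₁ : β ≤ 1) (x : ι → ZMod 2) :
    Measure.pi (fun _ : ι => flipNoise β) {x} =
      ENNReal.ofReal (β ^ Fintype.card ι * ((1 - β) / β) ^ (hammingNorm x : ℤ)) := by
  classical
  rw [Measure.pi_singleton]
  simp only [flipNoise_singleton]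
  rw [← ENNReal.ofReal_prod_of_nonneg fun i _ => by split_ifs <;> linarith,
    prod_ite_eq_zero_eq_pow_mul_pow, zpow_natCast, div_pow,
    pow_sub₀ β hβ₀.ne' hammingNorm_le_card_fintype]
  field_simp

theorem ofReal_zpow_mul_pi_flipNoise_singleton (hβ₀ : 0 < β) (hβ₁ : β < 1) (m : ℤ)
    (x : ι → ZMod 2) :
    ENNReal.ofReal (((1 - β) / β) ^ m) * Measure.pi (fun _ : ι => flipNoise β) {x} =
      ENNReal.ofReal (β ^ Fintype.card ι * ((1 - β) / β) ^ (m + hammingNorm x)) := by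
  have hq : 0 < (1 - β) / β := div_pos (by linarith) hβ₀
  rw [pi_flipNoise_singleton hβ₀ hβ₁.le, ← ENNReal.ofReal_mul (zpow_pos hq m).le,
    zpow_add₀ hq.ne']
  ring_nf

theorem one_sub_div_zpow_le_zpow (hβ₀ : 1 / 2 ≤ β) (hβ₁ : β < 1) {k l : ℤ} (h : k ≤ l) :
    ((1 - β) / β) ^ l ≤ ((1 - β) / β) ^ k :=
  have hβ : 0 < β := by linarith
  zpow_le_zpow_right_of_le_one₀ (div_pos (by linarith) hβ) ((div_le_one hβ).2 (by linarith)) h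

theorem pi_flipNoise_singleton_le (hβ₀ : 1 / 2 ≤ β) (hβ₁ : β < 1) {m : ℤ} {x y : ι → ZMod 2}
    (h : m ≤ (hammingNorm y : ℤ) - hammingNorm x) :
    Measure.pi (fun _ : ι => flipNoise β) {y} ≤
      ENNReal.ofReal (((1 - β) / β) ^ m) * Measure.pi (fun _ : ι => flipNoise β) {x} := by
  have hβ : 0 < β := by linarith
  rw [ofReal_zpow_mul_pi_flipNoise_singleton hβ hβ₁, pi_flipNoise_singleton hβ hβ₁.le]
  exact ENNReal.ofReal_le_ofReal <| mul_le_mul_of_nonneg_left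
    (one_sub_div_zpow_le_zpow hβ₀ hβ₁ (by linarith)) (by positivity)

theorem le_pi_flipNoise_singleton (hβ₀ : 1 / 2 ≤ β) (hβ₁ : β < 1) {m : ℤ} {x y : ι → ZMod 2}
    (h : (hammingNorm y : ℤ) - hammingNorm x ≤ m) :
    ENNReal.ofReal (((1 - β) / β) ^ m) * Measure.pi (fun _ : ι => flipNoise β) {x} ≤
      Measure.pi (fun _ : ι => flipNoise β) {y} := by
  have hβ : 0 < β := by linarith
  rw [ofReal_zpow_mul_pi_flipNoise_singleton hβ hβ₁, pi_flipNoise_singleton hβ hβ₁.le]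
  exact ENNReal.ofReal_le_ofReal <| mul_le_mul_of_nonneg_left
    (one_sub_div_zpow_le_zpow hβ₀ hβ₁ (by linarith)) (by positivity)

theorem map_const_add_singleton (P : Measure (ι → ZMod 2)) (c z : ι → ZMod 2) : P.map (c + ·) {z} = P {z + c} := by
  rw [Measure.map_apply (measurable_const_add c) (measurableSet_singleton z),
    Set.preimage_add_left_singleton, add_comm]
  congr
  funext i
  exact ZMod.neg_eq_self_mod_two (c i)

theorem map_add_pi_flipNoise_le_of_level_region (hβ₀ : 1 / 2 ≤ β) (hβ₁ : β < 1)
    (a Δ : ι → ZMod 2) (m : ℤ) {H' A : Set (ι → ZMod 2)}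
    (hH' : H' ⊆ {z | (hammingNorm (z + a + Δ) : ℤ) - (hammingNorm (z + a) : ℤ) = m})
    (hA : (Measure.pi fun _ : ι => flipNoise β).map (a + ·)
        ({z | m < (hammingNorm (z + a + Δ) : ℤ) - (hammingNorm (z + a) : ℤ)} ∪ H') ≤
      (Measure.pi fun _ : ι => flipNoise β).map (a + ·) A) :
    (Measure.pi fun _ : ι => flipNoise β).map (a + Δ + ·)
        ({z | m < (hammingNorm (z + a + Δ) : ℤ) - (hammingNorm (z + a) : ℤ)} ∪ H') ≤
      (Measure.pi fun _ : ι => flipNoise β).map (a + Δ + ·) A := by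
  refine measure_le_of_likelihoodRatio (t := ENNReal.ofReal (((1 - β) / β) ^ m))
    (fun z hz => ?_) (fun z hz => ?_) hA
  all_goals rw [map_const_add_singleton, map_const_add_singleton, ← add_assoc]
  · refine pi_flipNoise_singleton_le hβ₀ hβ₁ ?_
    rcases hz with hlt | hz
    exacts [hlt.le, (hH' hz).ge]
  · exact le_pi_flipNoise_singleton hβ₀ hβ₁ (not_lt.1 fun hlt => hz (.inl hlt))

end ProductNoise

/-- **Theorems 2 & 3 combined (Certified Defense Budget for Structure Perturbations)**:
if `P(h(a ⊕ Γ) = 1) > 1/2` and for every `Δ` with `‖Δ‖₀ ≤ ε` there are a level `μ_Δ` and a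
subset `H'_Δ` of the boundary level set such that the region
`H_Δ = (⋃_{i > μ_Δ} H_i(Δ)) ∪ H'_Δ` satisfies `P(a ⊕ Γ ∈ H_Δ) ≤ P(h(a ⊕ Γ) = 1)` and
`P(a ⊕ Δ ⊕ Γ ∈ H_Δ) > 1/2`, then for every such `Δ` the positive probability after
perturbation exceeds `1/2`, and hence the Bernoulli-smoothed classifier `g̃` satisfies
`g̃(a ⊕ Δ) = g̃(a) = 1`. Here `H_i(Δ) = {z : ‖z ⊕ a ⊕ Δ‖₀ − ‖z ⊕ a‖₀ = i}`, `⊕` is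
coordinatewise XOR (addition in `ZMod 2`), and `‖·‖₀` is the Hamming weight. -/
theorem stmt_15
    (n : ℕ) (β : ℝ) (hβ : β ∈ Set.Ioo (1 / 2 : ℝ) 1)
    (μ : Measure (Fin n → ZMod 2))
    (hμ : μ = Measure.pi (fun _ => flipNoise β))
    (h : (Fin n → ZMod 2) → Bool) (a : Fin n → ZMod 2)
    (gsmooth : (Fin n → ZMod 2) → Bool)
    (hgsmooth : ∀ b, gsmooth b = true ↔ (1 : ℝ≥0∞) / 2 < μ {γ | h (b + γ) = true})
    (hpos : (1 : ℝ≥0∞) / 2 < μ {γ | h (a + γ) = true})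
    (ε : ℕ)
    (hcert : ∀ Δ : Fin n → ZMod 2, hammingNorm Δ ≤ ε →
      ∃ (m : ℤ) (H' : Set (Fin n → ZMod 2)),
        H' ⊆ {z | (hammingNorm (z + a + Δ) : ℤ) - (hammingNorm (z + a) : ℤ) = m} ∧
        μ {γ | a + γ ∈
            ({z | m < (hammingNorm (z + a + Δ) : ℤ) - (hammingNorm (z + a) : ℤ)} ∪ H')} ≤
          μ {γ | h (a + γ) = true} ∧
        (1 : ℝ≥0∞) / 2 < μ {γ | a + Δ + γ ∈
            ({z | m < (hammingNorm (z + a + Δ) : ℤ) - (hammingNorm (z + a) : ℤ)} ∪ H')}) :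
    ∀ Δ : Fin n → ZMod 2, hammingNorm Δ ≤ ε →
      (1 : ℝ≥0∞) / 2 < μ {γ | h (a + Δ + γ) = true} ∧
        gsmooth (a + Δ) = gsmooth a ∧ gsmooth a = true := by
  subst hμ
  intro Δ hΔ
  obtain ⟨m, H', hH', hle, hgt⟩ := hcert Δ hΔ
  have hlaw (c : Fin n → ZMod 2) (S : Set (Fin n → ZMod 2)) :
      Measure.pi (fun _ => flipNoise β) {γ | c + γ ∈ S} =
        (Measure.pi fun _ => flipNoise β).map (c + ·) S :=
    (Measure.map_apply (measurable_const_add c) (.of_discrete)).symm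
  have hposΔ : (1 : ℝ≥0∞) / 2 < Measure.pi (fun _ => flipNoise β) {γ | h (a + Δ + γ) = true} :=
    calc (1 : ℝ≥0∞) / 2 < _ := hgt
      _ = _ := hlaw _ _
      _ ≤ _ := map_add_pi_flipNoise_le_of_level_region hβ.1.le hβ.2 a Δ m
          hH' ((hlaw _ _).symm.trans_le (hle.trans_eq (hlaw a {z | h z = true})))
      _ = _ := (hlaw _ _).symm
  have ha := (hgsmooth a).2 hpos
  exact ⟨hposΔ, by rw [(hgsmooth (a + Δ)).2 hposΔ, ha], ha⟩
end
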